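/- Up to Aff(ℤ²), the triangle with vertices (0,0), (1,2), (2,1) is the only lattice triangle with exactly two interior integral points and all three edges of lattice length 1. -/

import Mathlib

/-- Embedding of the integer lattice into the real plane. -/
def toR (p : ℤ × ℤ) : ℝ × ℝ := ((p.1 : ℝ), (p.2 : ℝ))

/-- `T` is a lattice-preserving affine automorphism of ℤ² (an element of Aff(ℤ²)). -/
def IsUnimodularAffine (T : ℤ × ℤ → ℤ × ℤ) : Prop :=
  ∃ a b c d e f : ℤ, (a * d - b * c = 1 ∨ a * d - b * c = -1) ∧
    ∀ p : ℤ × ℤ, T p = (a * p.1 + b * p.2 + e, c * p.1 + d * p.2 + f)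

/-- Two finite lattice point configurations are equivalent under Aff(ℤ²). -/
def LatticeEquiv (Q Q' : Finset (ℤ × ℤ)) : Prop :=
  ∃ T : ℤ × ℤ → ℤ × ℤ, IsUnimodularAffine T ∧ Q.image T = Q'

/-- The convex hull of a lattice point configuration, in ℝ². -/
noncomputable def hullR (Q : Finset (ℤ × ℤ)) : Set (ℝ × ℝ) :=
  convexHull ℝ (toR '' ↑Q)

/-- `Q` is the vertex set of a lattice polygon with `n` vertices, all of whose boundary
lattice points are vertices (i.e. all edges have lattice length 1) and with exactly `i`
interior lattice points. -/
def IsLatticePolygonPrimitiveEdges (Q : Finset (ℤ × ℤ)) (n i : ℕ) : Prop :=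
  Q.card = n ∧
  (∀ p ∈ Q, toR p ∈ Set.extremePoints ℝ (hullR Q)) ∧
  (∀ q : ℤ × ℤ, toR q ∈ frontier (hullR Q) → q ∈ Q) ∧
  Set.ncard {q : ℤ × ℤ | toR q ∈ interior (hullR Q)} = i

/-- The triangle conv{(0,0),(2,1),(1,3)} with interior points (1,1) and (1,2). -/
def T0 : Finset (ℤ × ℤ) := {(0, 0), (2, 1), (1, 3)}

/-!
A unimodular affine map of `ℤ²` extends to an affine homeomorphism of `ℝ²`, so it preserves
vertices, boundary lattice points and interior lattice points. By Bézout and a shear, a lattice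
triangle is equivalent to `(0,0), (g,0), (m,h)` with `0 ≤ m < h`; primitive edges force `g = 1`
and `gcd(m, h) = gcd(m - 1, h) = 1`. The row `0 < y < h` then holds exactly one interior lattice
point, `x = ⌊m y / h⌋ + 1`, when `y < m y mod h`, and none otherwise; `y ↦ h - y` swaps the two
cases, so there are `(h - 1) / 2` interior points. Two of them force `h = 5` and `m ∈ {2, 3, 4}`,
and each of these three triangles is equivalent to `T0`.
-/

section Orient

variable {R : Type*} [CommRing R]

/-- Twice the signed area of the triangle `P Q p`, as an affine function of `p`. -/
def orient (P Q : R × R) : R × R →ᵃ[R] R where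
  toFun p := (Q.1 - P.1) * (p.2 - P.2) - (Q.2 - P.2) * (p.1 - P.1)
  linear := (Q.1 - P.1) • LinearMap.snd R R R - (Q.2 - P.2) • LinearMap.fst R R R
  map_vadd' p v := by
    simp only [vadd_eq_add, Prod.snd_add, Prod.fst_add, LinearMap.sub_apply, LinearMap.smul_apply,
      LinearMap.snd_apply, smul_eq_mul, LinearMap.fst_apply]
    ring

lemma orient_apply (P Q p : R × R) :
    orient P Q p = (Q.1 - P.1) * (p.2 - P.2) - (Q.2 - P.2) * (p.1 - P.1) := rfl

lemma orient_rotate (A B C : R × R) : orient B C A = orient A B C := by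
  simp only [orient_apply]; ring

lemma orient_swap (A B C : R × R) : orient A C B = -orient A B C := by
  simp only [orient_apply]; ring

lemma orient_add_orient_add_orient (A B C p : R × R) :
    orient A B p + orient B C p + orient C A p = orient A B C := by
  simp only [orient_apply]; ring

lemma orient_smul_eq (A B C p : R × R) :
    orient A B C • p = orient B C p • A + orient C A p • B + orient A B p • C := by
  ext <;> simp only [orient_apply, Prod.smul_fst, Prod.smul_snd, Prod.fst_add, Prod.snd_add,
    smul_eq_mul] <;> ring

@[simp]
lemma orient_self (P p : R × R) : orient P P p = 0 := by simp [orient_apply]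

@[simp]
lemma orient_self_left (P Q : R × R) : orient P Q P = 0 := by simp [orient_apply]

@[simp]
lemma orient_self_right (P Q : R × R) : orient P Q Q = 0 := by rw [orient_apply]; ring

lemma ne_of_orient_ne_zero {A B C : R × R} (hD : orient A B C ≠ 0) :
    A ≠ B ∧ B ≠ C ∧ C ≠ A := by
  refine ⟨?_, ?_, ?_⟩ <;> rintro rfl
  · simp at hD
  · rw [← orient_rotate] at hD; simp at hD
  · rw [orient_rotate] at hD; simp at hD

end Orient

section Extreme

variable {𝕜 E : Type*} [Field 𝕜] [LinearOrder 𝕜] [IsStrictOrderedRing 𝕜] [AddCommGroup E]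
  [Module 𝕜 E]

lemma mem_extremePoints_of_affine_nonneg {s : Set E} {x : E} (φ : E →ᵃ[𝕜] 𝕜) (hx : x ∈ s)
    (hφ : ∀ y ∈ s, 0 ≤ φ y) (hzero : ∀ y ∈ s, φ y = 0 → y = x) (hφx : φ x = 0) :
    x ∈ s.extremePoints 𝕜 := by
  refine ⟨hx, fun y hy z hz hxyz => ?_⟩
  obtain ⟨a, b, ha, hb, -, hab⟩ : φ x ∈ openSegment 𝕜 (φ y) (φ z) := by
    rw [← image_openSegment]; exact ⟨x, hxyz, rfl⟩
  have hy0 := hφ y hy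
  have hz0 := hφ z hz
  rw [hφx, smul_eq_mul, smul_eq_mul] at hab
  exact hzero y hy (by nlinarith)

end Extreme

section Triangle

variable {A B C P Q : ℝ × ℝ}

lemma isOpenMap_orient (h : P ≠ Q) : IsOpenMap (orient P Q) := by
  have hn : 0 < (Q.1 - P.1) ^ 2 + (Q.2 - P.2) ^ 2 := by
    by_contra! hle
    exact h (Prod.ext (by nlinarith) (by nlinarith))
  refine AffineMap.isOpenMap_linear_iff.mp (LinearMap.isOpenMap_of_finiteDimensional _ ?_)
  intro r
  refine ⟨(r / ((Q.1 - P.1) ^ 2 + (Q.2 - P.2) ^ 2)) • (-(Q.2 - P.2), Q.1 - P.1), ?_⟩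
  simp only [orient, Prod.smul_mk, smul_eq_mul, LinearMap.sub_apply, LinearMap.smul_apply,
    LinearMap.snd_apply, LinearMap.fst_apply]
  field_simp
  ring

lemma interior_preimage_orient (h : P ≠ Q) (s : Set ℝ) :
    interior (orient P Q ⁻¹' s) = orient P Q ⁻¹' interior s :=
  ((isOpenMap_orient h).preimage_interior_eq_interior_preimage
    (AffineMap.continuous_of_finiteDimensional _) s).symm

lemma convexHull_triangle (hD : 0 < orient A B C) :
    convexHull ℝ {A, B, C} = {p | 0 ≤ orient A B p ∧ 0 ≤ orient B C p ∧ 0 ≤ orient C A p} := by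
  have hBCA : 0 ≤ orient B C A := by rw [orient_rotate]; exact hD.le
  have hCAB : 0 ≤ orient C A B := by rw [← orient_rotate]; exact hD.le
  apply subset_antisymm
  · refine convexHull_min ?_ ?_
    · rintro p (rfl | rfl | rfl) <;> simp [hD.le, hBCA, hCAB]
    · exact ((convex_Ici 0).affine_preimage (orient A B)).inter
        (((convex_Ici 0).affine_preimage (orient B C)).inter
          ((convex_Ici 0).affine_preimage (orient C A)))
  · rintro p ⟨hAB, hBC, hCA⟩
    have hp : p = (orient B C p / orient A B C) • A + (orient C A p / orient A B C) • B
        + (orient A B p / orient A B C) • C := by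
      simp only [div_eq_inv_mul, mul_smul, ← smul_add, ← orient_smul_eq, inv_smul_smul₀ hD.ne']
    rw [hp]
    have hw : orient B C p / orient A B C + orient C A p / orient A B C
        + orient A B p / orient A B C = 1 := by
      rw [← add_div, ← add_div, orient_add_orient_add_orient, orient_rotate, div_self hD.ne']
    have := (convex_convexHull ℝ ({A, B, C} : Set (ℝ × ℝ))).sum_mem (t := Finset.univ)
      (w := ![orient B C p / orient A B C, orient C A p / orient A B C,
        orient A B p / orient A B C]) (z := ![A, B, C])
      (by intro i _; fin_cases i <;> simp <;> positivity)
      (by simpa [Fin.sum_univ_three] using hw)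
      (by intro i _; fin_cases i <;> apply subset_convexHull <;> simp)
    simpa [Fin.sum_univ_three, add_assoc] using this

lemma interior_convexHull_triangle (hD : 0 < orient A B C) :
    interior (convexHull ℝ {A, B, C})
      = {p | 0 < orient A B p ∧ 0 < orient B C p ∧ 0 < orient C A p} := by
  obtain ⟨hAB, hBC, hCA⟩ := ne_of_orient_ne_zero hD.ne'
  have hhull : convexHull ℝ {A, B, C}
      = orient A B ⁻¹' Set.Ici 0 ∩ (orient B C ⁻¹' Set.Ici 0 ∩ orient C A ⁻¹' Set.Ici 0) := by
    rw [convexHull_triangle hD]; rfl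
  rw [hhull, interior_inter, interior_inter, interior_preimage_orient hAB,
    interior_preimage_orient hBC, interior_preimage_orient hCA, interior_Ici]
  rfl

lemma frontier_convexHull_triangle (hD : 0 < orient A B C) :
    frontier (convexHull ℝ {A, B, C})
      = {p | (0 ≤ orient A B p ∧ 0 ≤ orient B C p ∧ 0 ≤ orient C A p) ∧
          (orient A B p = 0 ∨ orient B C p = 0 ∨ orient C A p = 0)} := by
  have hclosed : IsClosed (convexHull ℝ ({A, B, C} : Set (ℝ × ℝ))) :=
    ((Set.toFinite _).isCompact_convexHull (𝕜 := ℝ)).isClosed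
  rw [hclosed.frontier_eq, interior_convexHull_triangle hD, convexHull_triangle hD]
  ext p
  simp only [Set.mem_sdiff, Set.mem_ofPred_eq]
  constructor
  · rintro ⟨⟨h1, h2, h3⟩, hn⟩
    refine ⟨⟨h1, h2, h3⟩, ?_⟩
    by_contra! hc
    exact hn ⟨h1.lt_of_ne' hc.1, h2.lt_of_ne' hc.2.1, h3.lt_of_ne' hc.2.2⟩
  · rintro ⟨hnonneg, hz⟩
    refine ⟨hnonneg, ?_⟩
    rintro ⟨p1, p2, p3⟩
    rcases hz with hz | hz | hz <;> linarith

lemma interior_convexHull_triangle_eq_empty (hAB : A ≠ B) (hD : orient A B C = 0) :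
    interior (convexHull ℝ {A, B, C}) = ∅ := by
  have hsub : convexHull ℝ {A, B, C} ⊆ orient A B ⁻¹' {0} := by
    refine convexHull_min ?_ ((convex_singleton 0).affine_preimage _)
    rintro p (rfl | rfl | rfl) <;> simp [hD]
  refine Set.subset_eq_empty (interior_mono hsub) ?_
  rw [interior_preimage_orient hAB, interior_singleton, Set.preimage_empty]

lemma left_mem_extremePoints_triangle (hD : 0 < orient A B C) :
    A ∈ (convexHull ℝ {A, B, C}).extremePoints ℝ := by
  rw [convexHull_triangle hD]
  refine mem_extremePoints_of_affine_nonneg (orient A B + orient C A) ?_ ?_ ?_ ?_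
  · exact ⟨by simp, by rw [orient_rotate]; exact hD.le, by simp⟩
  · rintro p ⟨h1, -, h3⟩; simp only [AffineMap.coe_add, Pi.add_apply]; positivity
  · rintro p ⟨h1, h2, h3⟩ h0
    simp only [AffineMap.coe_add, Pi.add_apply] at h0
    have hAB : orient A B p = 0 := by linarith
    have hCA : orient C A p = 0 := by linarith
    have hBC : orient B C p = orient A B C := by
      linarith [orient_add_orient_add_orient A B C p]
    have hp := orient_smul_eq A B C p
    rw [hAB, hBC, hCA, zero_smul, zero_smul, add_zero, add_zero] at hp
    exact smul_right_injective _ hD.ne' hp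
  · simp

lemma mem_extremePoints_triangle (hD : 0 < orient A B C) :
    A ∈ (convexHull ℝ {A, B, C}).extremePoints ℝ ∧ B ∈ (convexHull ℝ {A, B, C}).extremePoints ℝ ∧
      C ∈ (convexHull ℝ {A, B, C}).extremePoints ℝ := by
  have hB := left_mem_extremePoints_triangle (A := B) (B := C) (C := A) (by rwa [orient_rotate])
  have hC := left_mem_extremePoints_triangle (A := C) (B := A) (C := B)
    (by rwa [← orient_rotate])
  have hBCA : ({B, C, A} : Set (ℝ × ℝ)) = {A, B, C} := by
    ext; simp only [Set.mem_insert_iff, Set.mem_singleton_iff]; tauto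
  have hCAB : ({C, A, B} : Set (ℝ × ℝ)) = {A, B, C} := by
    ext; simp only [Set.mem_insert_iff, Set.mem_singleton_iff]; tauto
  exact ⟨left_mem_extremePoints_triangle hD, hBCA ▸ hB, hCAB ▸ hC⟩

end Triangle

def planeLinearMap (a b c d : ℝ) : ℝ × ℝ →ₗ[ℝ] ℝ × ℝ where
  toFun p := (a * p.1 + b * p.2, c * p.1 + d * p.2)
  map_add' p q := by
    simp only [Prod.fst_add, Prod.snd_add, Prod.mk_add_mk, Prod.mk.injEq]
    constructor <;> ring
  map_smul' r p := by
    simp only [Prod.smul_fst, Prod.smul_snd, smul_eq_mul, RingHom.id_apply, Prod.smul_mk,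
      Prod.mk.injEq]
    constructor <;> ring

lemma planeLinearMap_apply (a b c d : ℝ) (p : ℝ × ℝ) :
    planeLinearMap a b c d p = (a * p.1 + b * p.2, c * p.1 + d * p.2) := rfl

namespace IsUnimodularAffine

variable {T T' : ℤ × ℤ → ℤ × ℤ}

lemma det_mul_self {a b c d : ℤ} (h : a * d - b * c = 1 ∨ a * d - b * c = -1) :
    (a * d - b * c) * (a * d - b * c) = 1 := by
  rcases h with h | h <;> rw [h] <;> norm_num

lemma comp (hT : IsUnimodularAffine T) (hT' : IsUnimodularAffine T') :
    IsUnimodularAffine (T' ∘ T) := by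
  obtain ⟨a, b, c, d, e, f, hdet, hTf⟩ := hT
  obtain ⟨a', b', c', d', e', f', hdet', hTf'⟩ := hT'
  refine ⟨a' * a + b' * c, a' * b + b' * d, c' * a + d' * c, c' * b + d' * d,
    a' * e + b' * f + e', c' * e + d' * f + f', ?_, fun p => ?_⟩
  · have key : (a' * a + b' * c) * (c' * b + d' * d) - (a' * b + b' * d) * (c' * a + d' * c)
        = (a' * d' - b' * c') * (a * d - b * c) := by ring
    rw [key]
    rcases hdet with h | h <;> rcases hdet' with h' | h' <;> simp [h, h']
  · rw [Function.comp_apply, hTf p, hTf']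
    ext <;> simp only <;> ring

/-- The inverse matrix is `δ • adj M` with `δ = det M = ±1`. -/
lemma exists_inverse (hT : IsUnimodularAffine T) :
    ∃ S, IsUnimodularAffine S ∧ Function.LeftInverse S T ∧ Function.RightInverse S T := by
  obtain ⟨a, b, c, d, e, f, hdet, hTf⟩ := hT
  set δ := a * d - b * c
  have hδ : δ * δ = 1 := det_mul_self hdet
  refine ⟨fun p => (δ * d * p.1 + -(δ * b) * p.2 + (δ * b * f - δ * d * e),
      -(δ * c) * p.1 + δ * a * p.2 + (δ * c * e - δ * a * f)),
    ⟨δ * d, -(δ * b), -(δ * c), δ * a, _, _, ?_, fun p => rfl⟩, fun p => ?_, fun p => ?_⟩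
  · have key : δ * d * (δ * a) - -(δ * b) * -(δ * c) = δ * δ * δ := by ring
    rwa [key, hδ, one_mul]
  · simp only [hTf p]
    ext
    · linear_combination p.1 * hδ
    · linear_combination p.2 * hδ
  · simp only [hTf]
    ext
    · linear_combination (p.1 - e) * hδ
    · linear_combination (p.2 - f) * hδ

lemma bijective (hT : IsUnimodularAffine T) : Function.Bijective T := by
  obtain ⟨S, -, hl, hr⟩ := hT.exists_inverse
  exact ⟨hl.injective, hr.surjective⟩

lemma exists_affineEquiv (hT : IsUnimodularAffine T) :
    ∃ g : (ℝ × ℝ) ≃ᵃ[ℝ] (ℝ × ℝ), ∀ p, toR (T p) = g (toR p) := by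
  obtain ⟨a, b, c, d, e, f, hdet, hTf⟩ := hT
  have hδ : ((a : ℝ) * d - b * c) * (a * d - b * c) = 1 := by exact_mod_cast det_mul_self hdet
  set δ : ℝ := a * d - b * c
  let L : (ℝ × ℝ) ≃ₗ[ℝ] (ℝ × ℝ) := LinearEquiv.ofLinearMap (f := planeLinearMap a b c d)
    (g := planeLinearMap (δ * d) (-(δ * b)) (-(δ * c)) (δ * a))
    (LinearMap.ext fun ⟨x, y⟩ => by
      simp only [LinearMap.comp_apply, planeLinearMap_apply, LinearMap.id_apply, Prod.mk.injEq]
      constructor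
      · linear_combination x * hδ
      · linear_combination y * hδ)
    (LinearMap.ext fun ⟨x, y⟩ => by
      simp only [LinearMap.comp_apply, planeLinearMap_apply, LinearMap.id_apply, Prod.mk.injEq]
      constructor
      · linear_combination x * hδ
      · linear_combination y * hδ)
  refine ⟨L.toAffineEquiv.trans (AffineEquiv.constVAdd ℝ (ℝ × ℝ) (toR (e, f))), fun p => ?_⟩
  simp only [L, toR, hTf p, AffineEquiv.trans_apply, LinearEquiv.coe_toAffineEquiv,
    LinearEquiv.coe_ofLinearMap, planeLinearMap_apply, AffineEquiv.constVAdd_apply, vadd_eq_add,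
    Prod.mk_add_mk, Int.cast_add, Int.cast_mul]
  exact Prod.ext (add_comm _ _) (add_comm _ _)

end IsUnimodularAffine

lemma AffineEquiv.image_extremePoints {𝕜 E F : Type*} [Ring 𝕜] [PartialOrder 𝕜]
    [IsOrderedRing 𝕜] [AddCommGroup E] [Module 𝕜 E] [AddCommGroup F] [Module 𝕜 F]
    (f : E ≃ᵃ[𝕜] F) (s : Set E) : f '' s.extremePoints 𝕜 = (f '' s).extremePoints 𝕜 := by
  ext b
  obtain ⟨a, rfl⟩ := f.surjective b
  have : ∀ x y, f '' openSegment 𝕜 x y = openSegment 𝕜 (f x) (f y) :=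
    image_openSegment _ f.toAffineMap
  simp only [mem_extremePoints, f.surjective.forall, f.injective.mem_set_image,
    f.injective.eq_iff, ← this]

section Invariance

variable {T : ℤ × ℤ → ℤ × ℤ} {g : (ℝ × ℝ) ≃ᵃ[ℝ] (ℝ × ℝ)}

lemma hullR_image (hg : ∀ p, toR (T p) = g (toR p)) (Q : Finset (ℤ × ℤ)) :
    hullR (Q.image T) = g '' hullR Q := by
  have := g.toAffineMap.image_convexHull (toR '' ↑Q)
  simp only [AffineEquiv.coe_toAffineMap, Set.image_image] at this
  rw [hullR, hullR, this, Finset.coe_image, Set.image_image]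
  simp_rw [hg]

lemma setOf_toR_mem_image (hT : Function.Bijective T) (hg : ∀ p, toR (T p) = g (toR p))
    (X : Set (ℝ × ℝ)) : {q | toR q ∈ g '' X} = T '' {q | toR q ∈ X} := by
  ext q
  obtain ⟨r, rfl⟩ := hT.2 q
  simp only [Set.mem_ofPred_eq, hg, g.injective.mem_set_image, hT.1.mem_set_image]

theorem IsLatticePolygonPrimitiveEdges.image {Q : Finset (ℤ × ℤ)} {n i : ℕ}
    (hT : IsUnimodularAffine T) (hQ : IsLatticePolygonPrimitiveEdges Q n i) :
    IsLatticePolygonPrimitiveEdges (Q.image T) n i := by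
  obtain ⟨hcard, hext, hfront, hint⟩ := hQ
  obtain ⟨g, hg⟩ := hT.exists_affineEquiv
  have hbij := hT.bijective
  let h : (ℝ × ℝ) ≃ₜ (ℝ × ℝ) := g.toContinuousAffineEquiv.toHomeomorph
  have hh : ⇑h = g := rfl
  refine ⟨?_, ?_, fun q hq => ?_, ?_⟩
  · rw [Finset.card_image_of_injective _ hbij.1, hcard]
  · rintro _ hq
    obtain ⟨p, hp, rfl⟩ := Finset.mem_image.mp hq
    rw [hullR_image hg, hg, ← g.image_extremePoints]
    exact Set.mem_image_of_mem g (hext p hp)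
  · rw [hullR_image hg, ← hh, ← h.image_frontier, hh] at hq
    obtain ⟨r, hr, rfl⟩ : q ∈ T '' {q | toR q ∈ frontier (hullR Q)} :=
      setOf_toR_mem_image hbij hg _ ▸ hq
    exact Finset.mem_image_of_mem T (hfront r hr)
  · rw [hullR_image hg, ← hh, ← h.image_interior, hh, setOf_toR_mem_image hbij hg,
      Set.ncard_image_of_injective _ hbij.1, hint]

end Invariance

namespace LatticeEquiv

variable {Q Q' Q'' : Finset (ℤ × ℤ)}

lemma symm (h : LatticeEquiv Q Q') : LatticeEquiv Q' Q := by
  obtain ⟨T, hT, rfl⟩ := h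
  obtain ⟨S, hS, hl, -⟩ := hT.exists_inverse
  exact ⟨S, hS, by rw [Finset.image_image, hl.comp_eq_id, Finset.image_id]⟩

lemma trans (h : LatticeEquiv Q Q') (h' : LatticeEquiv Q' Q'') : LatticeEquiv Q Q'' := by
  obtain ⟨T, hT, rfl⟩ := h
  obtain ⟨T', hT', rfl⟩ := h'
  exact ⟨T' ∘ T, hT.comp hT', Finset.image_image.symm⟩

lemma isLatticePolygonPrimitiveEdges (h : LatticeEquiv Q Q') {n i : ℕ}
    (hQ : IsLatticePolygonPrimitiveEdges Q n i) : IsLatticePolygonPrimitiveEdges Q' n i := by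
  obtain ⟨T, hT, rfl⟩ := h
  exact hQ.image hT

end LatticeEquiv

lemma latticeEquiv_triangle {a b c d e f : ℤ} (hdet : a * d - b * c = 1 ∨ a * d - b * c = -1)
    {A B C A' B' C' : ℤ × ℤ} (hA : (a * A.1 + b * A.2 + e, c * A.1 + d * A.2 + f) = A')
    (hB : (a * B.1 + b * B.2 + e, c * B.1 + d * B.2 + f) = B')
    (hC : (a * C.1 + b * C.2 + e, c * C.1 + d * C.2 + f) = C') :
    LatticeEquiv {A, B, C} {A', B', C'} :=
  ⟨_, ⟨a, b, c, d, e, f, hdet, fun _ => rfl⟩, by simp [hA, hB, hC]⟩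

lemma toR_injective : Function.Injective toR := fun p q h => by
  simp only [toR, Prod.mk.injEq, Int.cast_inj] at h
  exact Prod.ext h.1 h.2

lemma orient_toR (P Q p : ℤ × ℤ) : orient (toR P) (toR Q) (toR p) = orient P Q p := by
  simp [toR, orient_apply]

lemma hullR_triangle (A B C : ℤ × ℤ) :
    hullR {A, B, C} = convexHull ℝ {toR A, toR B, toR C} := by
  simp [hullR, Set.image_insert_eq]

section LatticeTriangle

variable {A B C : ℤ × ℤ}

lemma toR_mem_interior_hullR_triangle (hD : 0 < orient A B C) (q : ℤ × ℤ) :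
    toR q ∈ interior (hullR {A, B, C}) ↔
      0 < orient A B q ∧ 0 < orient B C q ∧ 0 < orient C A q := by
  rw [hullR_triangle, interior_convexHull_triangle (by rwa [orient_toR, Int.cast_pos])]
  simp only [Set.mem_ofPred_eq, orient_toR, Int.cast_pos]

lemma toR_mem_frontier_hullR_triangle (hD : 0 < orient A B C) (q : ℤ × ℤ) :
    toR q ∈ frontier (hullR {A, B, C}) ↔
      (0 ≤ orient A B q ∧ 0 ≤ orient B C q ∧ 0 ≤ orient C A q) ∧
        (orient A B q = 0 ∨ orient B C q = 0 ∨ orient C A q = 0) := by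
  rw [hullR_triangle, frontier_convexHull_triangle (by rwa [orient_toR, Int.cast_pos])]
  simp only [Set.mem_ofPred_eq, orient_toR, Int.cast_nonneg_iff, Int.cast_eq_zero]

lemma extremePoints_hullR_triangle (hD : 0 < orient A B C) :
    ∀ p ∈ ({A, B, C} : Finset (ℤ × ℤ)), toR p ∈ (hullR {A, B, C}).extremePoints ℝ := by
  have := mem_extremePoints_triangle (A := toR A) (B := toR B) (C := toR C)
    (by rwa [orient_toR, Int.cast_pos])
  rw [hullR_triangle]
  simp only [Finset.mem_insert, Finset.mem_singleton]
  rintro p (rfl | rfl | rfl)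
  exacts [this.1, this.2.1, this.2.2]

/-- Otherwise `A + (B - A) / gcd (B - A)` would be a boundary lattice point that is not a
vertex. -/
lemma isCoprime_of_frontier_subset (hD : 0 < orient A B C)
    (hfr : ∀ q, toR q ∈ frontier (hullR {A, B, C}) → q ∈ ({A, B, C} : Finset (ℤ × ℤ))) :
    IsCoprime (B.1 - A.1) (B.2 - A.2) := by
  rw [Int.isCoprime_iff_gcd_eq_one, ← Nat.cast_inj (R := ℤ), Nat.cast_one]
  set d : ℤ := ((B.1 - A.1).gcd (B.2 - A.2) : ℤ)
  obtain ⟨v₁, hv₁⟩ : d ∣ B.1 - A.1 := Int.gcd_dvd_left _ _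
  obtain ⟨v₂, hv₂⟩ : d ∣ B.2 - A.2 := Int.gcd_dvd_right _ _
  set q : ℤ × ℤ := (A.1 + v₁, A.2 + v₂)
  have hAB : orient A B q = 0 := by simp only [orient_apply, q, hv₁, hv₂]; ring
  have hBC : d * orient B C q = (d - 1) * orient A B C := by
    simp only [orient_apply, q]; linear_combination (C.2 - B.2) * hv₁ - (C.1 - B.1) * hv₂
  have hCA : d * orient C A q = orient A B C := by
    simp only [orient_apply, q]; linear_combination (C.1 - A.1) * hv₂ - (C.2 - A.2) * hv₁
  have hd : 1 ≤ d := by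
    have : d ≠ 0 := by rintro h0; rw [h0, zero_mul] at hCA; linarith
    have : 0 ≤ d := Int.natCast_nonneg _
    omega
  by_contra hd1
  have hq : q ∈ ({A, B, C} : Finset (ℤ × ℤ)) := by
    refine hfr q ((toR_mem_frontier_hullR_triangle hD q).mpr ⟨⟨hAB.ge, ?_, ?_⟩, Or.inl hAB⟩)
    · nlinarith
    · nlinarith
  simp only [Finset.mem_insert, Finset.mem_singleton] at hq
  rcases hq with hq | hq | hq <;> rw [hq] at hCA hAB
  · rw [orient_self_right, mul_zero] at hCA; linarith
  · have hCAB : orient C A B = orient A B C := by rw [orient_rotate, orient_rotate]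
    rw [hCAB] at hCA
    exact hd1 (mul_right_cancel₀ hD.ne' (hCA.trans (one_mul _).symm))
  · linarith

lemma isCoprime_edges_of_frontier_subset (hD : 0 < orient A B C)
    (hfr : ∀ q, toR q ∈ frontier (hullR {A, B, C}) → q ∈ ({A, B, C} : Finset (ℤ × ℤ))) :
    IsCoprime (B.1 - A.1) (B.2 - A.2) ∧ IsCoprime (C.1 - B.1) (C.2 - B.2) ∧
      IsCoprime (A.1 - C.1) (A.2 - C.2) := by
  have hrot : ({A, B, C} : Finset (ℤ × ℤ)) = {B, C, A} := by
    ext; simp only [Finset.mem_insert, Finset.mem_singleton]; tauto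
  have hrot' : ({A, B, C} : Finset (ℤ × ℤ)) = {C, A, B} := by
    ext; simp only [Finset.mem_insert, Finset.mem_singleton]; tauto
  refine ⟨isCoprime_of_frontier_subset hD hfr, ?_, ?_⟩
  · exact isCoprime_of_frontier_subset (by rwa [orient_rotate]) (hrot ▸ hfr)
  · exact isCoprime_of_frontier_subset (by rwa [← orient_rotate]) (hrot' ▸ hfr)

end LatticeTriangle

/-- Bézout gives a unimodular map with `A ↦ 0` and `B ↦ (gcd (B - A), 0)`; a shear then
reduces the first coordinate of the image of `C` modulo its height. -/
lemma exists_latticeEquiv_normalForm {A B C : ℤ × ℤ} (hD : 0 < orient A B C) :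
    ∃ g m h : ℤ, 0 < g ∧ 0 < h ∧ 0 ≤ m ∧ m < h ∧
      LatticeEquiv {A, B, C} {(0, 0), (g, 0), (m, h)} := by
  set g : ℤ := ((B.1 - A.1).gcd (B.2 - A.2) : ℤ)
  obtain ⟨v₁, hv₁⟩ : g ∣ B.1 - A.1 := Int.gcd_dvd_left _ _
  obtain ⟨v₂, hv₂⟩ : g ∣ B.2 - A.2 := Int.gcd_dvd_right _ _
  set α := (B.1 - A.1).gcdA (B.2 - A.2)
  set β := (B.1 - A.1).gcdB (B.2 - A.2)
  have hbez : g = (B.1 - A.1) * α + (B.2 - A.2) * β := Int.gcd_eq_gcd_ab _ _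
  set h := v₁ * (C.2 - A.2) - v₂ * (C.1 - A.1)
  have hgh : g * h = orient A B C := by
    simp only [orient_apply, h]; linear_combination (C.1 - A.1) * hv₂ - (C.2 - A.2) * hv₁
  have hg : 0 < g := (Int.natCast_nonneg _).lt_of_ne fun h0 : 0 = g => by
    rw [← h0, zero_mul] at hgh; linarith
  have hdet : α * v₁ - β * (-v₂) = 1 := by
    apply mul_left_cancel₀ hg.ne'
    linear_combination -hbez - α * hv₁ - β * hv₂
  have hh : 0 < h := pos_of_mul_pos_right (hgh ▸ hD) hg.le
  set m := α * (C.1 - A.1) + β * (C.2 - A.2)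
  have hbezout : LatticeEquiv {A, B, C} {(0, 0), (g, 0), (m, h)} :=
    latticeEquiv_triangle (e := -(α * A.1 + β * A.2)) (f := v₂ * A.1 - v₁ * A.2) (Or.inl hdet)
      (by ext <;> simp only <;> ring)
      (Prod.ext (by linear_combination -hbez) (by linear_combination -v₂ * hv₁ + v₁ * hv₂))
      (by ext <;> simp only [m, h] <;> ring)
  have hshear : LatticeEquiv {(0, 0), (g, 0), (m, h)} {(0, 0), (g, 0), (m % h, h)} :=
    latticeEquiv_triangle (a := 1) (b := -(m / h)) (c := 0) (d := 1) (e := 0) (f := 0)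
      (Or.inl (by ring)) (by simp) (by simp) (Prod.ext (by simp [Int.emod_def]; ring) (by simp))
  exact ⟨g, m % h, h, hg, hh, Int.emod_nonneg _ hh.ne', Int.emod_lt_of_pos _ hh,
    hbezout.trans hshear⟩

section Counting

variable {m h : ℤ}

lemma setOf_toR_mem_interior_normalForm (hh : 0 < h) :
    {q : ℤ × ℤ | toR q ∈ interior (hullR {(0, 0), (1, 0), (m, h)})} =
      (fun y => (m * y / h + 1, y)) '' ↑((Finset.Ioo 0 h).filter fun y => y < m * y % h) := by
  have hD : 0 < orient ((0, 0) : ℤ × ℤ) (1, 0) (m, h) := by simpa [orient_apply] using hh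
  ext ⟨x, y⟩
  have hdiv := Int.mul_ediv_add_emod (m * y) h
  have hr0 := Int.emod_nonneg (m * y) hh.ne'
  have hrh := Int.emod_lt_of_pos (m * y) hh
  simp only [Set.mem_ofPred_eq, toR_mem_interior_hullR_triangle hD, orient_apply, Finset.coe_filter,
    Finset.mem_Ioo, Set.mem_image, Prod.mk.injEq]
  constructor
  · rintro ⟨h1, h2, h3⟩
    have hlo : m * y / h < x := lt_of_mul_lt_mul_left (by linarith) hh.le
    have hhi : x - 1 < m * y / h + 1 := lt_of_mul_lt_mul_left (by linarith) hh.le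
    obtain rfl : x = m * y / h + 1 := by omega
    exact ⟨y, ⟨⟨by linarith, by linarith⟩, by linarith⟩, rfl, rfl⟩
  · rintro ⟨y, ⟨⟨hy0, -⟩, hyr⟩, rfl, rfl⟩
    exact ⟨by linarith, by linarith, by linarith⟩

lemma emod_sub_eq_sub_emod (hh : 0 < h) (hm : IsCoprime m h) {y : ℤ} (hy : 0 < y)
    (hyh : y < h) : m * (h - y) % h = h - m * y % h := by
  have hr0 : m * y % h ≠ 0 := fun hr => by
    have := (hm.symm.dvd_of_dvd_mul_left (Int.dvd_of_emod_eq_zero hr))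
    linarith [Int.le_of_dvd hy this]
  have hr0' := Int.emod_nonneg (m * y) hh.ne'
  have hrh := Int.emod_lt_of_pos (m * y) hh
  have key : m * (h - y) = (h - m * y % h) + h * (m - m * y / h - 1) := by
    linear_combination Int.mul_ediv_add_emod (m * y) h
  rw [key, Int.add_mul_emod_self_left]
  exact Int.emod_eq_of_lt (by omega) (by omega)

lemma emod_ne_self (hm : IsCoprime (m - 1) h) {y : ℤ} (hy : 0 < y) (hyh : y < h) :
    m * y % h ≠ y := fun hr => by
  have : h ∣ (m - 1) * y :=
    ⟨m * y / h, by linear_combination -Int.mul_ediv_add_emod (m * y) h + hr⟩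
  linarith [Int.le_of_dvd hy (hm.symm.dvd_of_dvd_mul_left this)]

/-- The involution `y ↦ h - y` exchanges the two sets: coprimality rules out `m y ≡ 0` and
`m y ≡ y` modulo `h`. -/
lemma card_filter_lt_emod_eq (hh : 0 < h) (hm : IsCoprime m h) (hm1 : IsCoprime (m - 1) h) :
    ((Finset.Ioo 0 h).filter fun y => y < m * y % h).card =
      ((Finset.Ioo 0 h).filter fun y => ¬ y < m * y % h).card := by
  refine Finset.card_nbij' (h - ·) (h - ·) ?_ ?_ (fun y _ => by simp) (fun y _ => by simp)
  · intro y hy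
    simp only [Finset.coe_filter, Finset.mem_Ioo, Set.mem_ofPred_eq] at hy ⊢
    rw [emod_sub_eq_sub_emod hh hm hy.1.1 hy.1.2]
    omega
  · intro y hy
    simp only [Finset.coe_filter, Finset.mem_Ioo, Set.mem_ofPred_eq] at hy ⊢
    have := emod_ne_self hm1 hy.1.1 hy.1.2
    rw [emod_sub_eq_sub_emod hh hm hy.1.1 hy.1.2]
    omega

theorem two_mul_ncard_interior_normalForm (hh : 0 < h) (hm : IsCoprime m h)
    (hm1 : IsCoprime (m - 1) h) :
    2 * {q : ℤ × ℤ | toR q ∈ interior (hullR {(0, 0), (1, 0), (m, h)})}.ncard = (h - 1).toNat := by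
  rw [setOf_toR_mem_interior_normalForm hh,
    Set.ncard_image_of_injective _ fun y y' hyy => congrArg Prod.snd hyy, Set.ncard_coe_finset,
    two_mul]
  nth_rw 2 [card_filter_lt_emod_eq hh hm hm1]
  rw [Finset.card_filter_add_card_filter_not, Int.card_Ioo, sub_zero]

end Counting

lemma normalForm_of_two_interior {g m h : ℤ} (hg : 0 < g) (hh : 0 < h) (hm0 : 0 ≤ m)
    (hmh : m < h) (hN : IsLatticePolygonPrimitiveEdges {(0, 0), (g, 0), (m, h)} 3 2) :
    g = 1 ∧ h = 5 ∧ (m = 2 ∨ m = 3 ∨ m = 4) := by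
  have hD : 0 < orient ((0, 0) : ℤ × ℤ) (g, 0) (m, h) := by
    simpa [orient_apply] using mul_pos hg hh
  obtain ⟨hbase, hright, hleft⟩ := isCoprime_edges_of_frontier_subset hD hN.2.2.1
  obtain rfl : g = 1 := by
    simp only [sub_zero, sub_self, isCoprime_zero_right, Int.isUnit_iff] at hbase
    omega
  have hm : IsCoprime m h := by simpa using hleft.neg_neg
  have hm1 : IsCoprime (m - 1) h := by simpa using hright
  obtain rfl : h = 5 := by
    have := two_mul_ncard_interior_normalForm hh hm hm1
    rw [hN.2.2.2] at this
    omega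
  have hm0' : m ≠ 0 := by rintro rfl; norm_num [isCoprime_zero_left, Int.isUnit_iff] at hm
  have hm1' : m ≠ 1 := by rintro rfl; norm_num [isCoprime_zero_left, Int.isUnit_iff] at hm1
  omega

lemma latticeEquiv_T0 {m : ℤ} (hm : m = 2 ∨ m = 3 ∨ m = 4) :
    LatticeEquiv {(0, 0), (1, 0), (m, 5)} T0 := by
  rcases hm with rfl | rfl | rfl
  · exact ⟨_, ⟨1, 0, 3, -1, 0, 0, by decide, fun _ => rfl⟩, by decide⟩
  · exact ⟨_, ⟨2, -1, 1, 0, 0, 0, by decide, fun _ => rfl⟩, by decide⟩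
  · exact ⟨_, ⟨-1, 1, -3, 2, 1, 3, by decide, fun _ => rfl⟩, by decide⟩

theorem isLatticePolygonPrimitiveEdges_T0 : IsLatticePolygonPrimitiveEdges T0 3 2 := by
  have hD : 0 < orient ((0, 0) : ℤ × ℤ) (2, 1) (1, 3) := by decide
  refine ⟨by decide, extremePoints_hullR_triangle hD, fun ⟨x, y⟩ hq => ?_, ?_⟩
  · rw [T0, toR_mem_frontier_hullR_triangle hD] at hq
    simp only [orient_apply] at hq
    simp only [T0, Finset.mem_insert, Finset.mem_singleton, Prod.mk.injEq]
    omega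
  · have hint : {q : ℤ × ℤ | toR q ∈ interior (hullR T0)} = {(1, 1), (1, 2)} := by
      ext ⟨x, y⟩
      simp only [T0, Set.mem_ofPred_eq, toR_mem_interior_hullR_triangle hD, orient_apply,
        Set.mem_insert_iff, Set.mem_singleton_iff, Prod.mk.injEq]
      omega
    rw [hint, Set.ncard_pair (by decide)]

lemma IsLatticePolygonPrimitiveEdges.exists_eq_triangle {Q : Finset (ℤ × ℤ)} {i : ℕ}
    (hQ : IsLatticePolygonPrimitiveEdges Q 3 i) (hi : i ≠ 0) :
    ∃ A B C : ℤ × ℤ, 0 < orient A B C ∧ Q = {A, B, C} := by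
  obtain ⟨A, B, C, hAB, -, -, rfl⟩ := Finset.card_eq_three.mp hQ.1
  rcases lt_trichotomy (orient A B C) 0 with hD | hD | hD
  · refine ⟨A, C, B, by rw [orient_swap]; omega, ?_⟩
    ext; simp only [Finset.mem_insert, Finset.mem_singleton]; tauto
  · have hempty : interior (hullR {A, B, C}) = ∅ := by
      rw [hullR_triangle]
      exact interior_convexHull_triangle_eq_empty (toR_injective.ne hAB)
        (by rw [orient_toR, hD, Int.cast_zero])
    have := hQ.2.2.2
    rw [hempty] at this
    simp only [Set.mem_empty_iff_false, Set.ofPred_false, Set.ncard_empty] at this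
    omega
  · exact ⟨A, B, C, hD, rfl⟩

/-- up to Aff(ℤ²), there is exactly one lattice triangle with exactly two
interior integral points and all edges of lattice length 1, namely T0. -/
theorem classification_triangles_two_interior_points (Q : Finset (ℤ × ℤ)) :
    IsLatticePolygonPrimitiveEdges Q 3 2 ↔ LatticeEquiv Q T0 := by
  refine ⟨fun hQ => ?_, fun h => h.symm.isLatticePolygonPrimitiveEdges
    isLatticePolygonPrimitiveEdges_T0⟩
  obtain ⟨A, B, C, hD, rfl⟩ := hQ.exists_eq_triangle two_ne_zero
  obtain ⟨g, m, h, hg, hh, hm0, hmh, he⟩ := exists_latticeEquiv_normalForm hD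
  obtain ⟨rfl, rfl, hm⟩ :=
    normalForm_of_two_interior hg hh hm0 hmh (he.isLatticePolygonPrimitiveEdges hQ)
  exact he.trans (latticeEquiv_T0 hm)
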